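/- arXiv:1706.03016 — 2 statements merged into one kernel-verified Lean document; each statement's English description precedes it below -/
import Mathlib

section
/- Let e be a bilinear map on a cyclic group G of prime order p. With ticket T_U = (g₀ · Y · g₁^{d'} · g₂^{s_u} · g₃^{ψ_u})^{1/(x_s+ω_u)} where Y = ξ^{x_u} · g₁^{d}, pseudonym Ps_U = ξ^{x_u} · g₁^{d_u}, d_u = d + d', F = T_U · ϑ^π, and Y_S = ρ^{x_s}, assuming x_s + ω_u ≠ 0, the following holds: e(F, Y_S) / (e(g₀,ρ) · e(Ps_U,ρ) · e(g₃,ρ)^{ψ_u}) = e(g₂,ρ)^{s_u} · e(F,ρ)^{-ω_u} · e(ϑ,ρ)^{ω_u·π} · e(ϑ, Y_S)^{π}. -/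
/-!
Since ρ generates `G`, every generator is `ρ ^ a` for a discrete logarithm `a ∈ ZMod p`, and
bilinearity turns every pairing value into a power of `e ρ ρ`. Both sides of the equation then
become `e ρ ρ` raised to exponents whose equality in `ZMod p` is a field identity: the factor
`x_s + ω_u` collected on `F` cancels the exponent `(x_s + ω_u)⁻¹` of the ticket.
-/

section ZModExponent

variable {M : Type*} [Monoid M] {n : ℕ} {a : M}

theorem pow_zmod_val_add [NeZero n] (ha : a ^ n = 1) (x y : ZMod n) :
    a ^ (x + y).val = a ^ x.val * a ^ y.val := by
  rw [ZMod.val_add, ← pow_eq_pow_mod _ ha, pow_add]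

theorem pow_zmod_val_mul (ha : a ^ n = 1) (x y : ZMod n) :
    a ^ (x * y).val = (a ^ x.val) ^ y.val := by
  rw [ZMod.val_mul, ← pow_eq_pow_mod _ ha, pow_mul]

end ZModExponent

section ZModExponentGroup

variable {G : Type*} [Group G] {n : ℕ} [NeZero n] {a : G}

theorem pow_zmod_val_neg (ha : a ^ n = 1) (x : ZMod n) : a ^ (-x).val = (a ^ x.val)⁻¹ :=
  eq_inv_of_mul_eq_one_left <| by
    rw [← pow_zmod_val_add ha, neg_add_cancel, ZMod.val_zero, pow_zero]

theorem exists_pow_zmod_val_eq (ha : a ^ n = 1) {y : G} (hy : y ∈ Subgroup.zpowers a) :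
    ∃ x : ZMod n, a ^ x.val = y := by
  have hfin : IsOfFinOrder a := isOfFinOrder_iff_pow_eq_one.2 ⟨n, NeZero.pos n, ha⟩
  obtain ⟨m, rfl⟩ := hfin.mem_powers_iff_mem_zpowers.2 hy
  exact ⟨m, by rw [ZMod.val_natCast, ← pow_eq_pow_mod _ ha]⟩

end ZModExponentGroup

theorem apply_pow_zmod_val_left {n : ℕ} [Fact (1 < n)] {G H : Type*} [Monoid G] [Monoid H]
    {e : G → G → H}
    (he : ∀ (g h : G) (a b : ZMod n), e (g ^ a.val) (h ^ b.val) = e g h ^ (a * b).val)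
    (g h : G) (a : ZMod n) : e (g ^ a.val) h = e g h ^ a.val := by
  simpa [ZMod.val_one] using he g h a 1

theorem ticket_validation_proof_correctness_general
    (p : ℕ) [Fact (Nat.Prime p)]
    (G Gτ : Type*) [CommGroup G] [CommGroup Gτ]
    (hGcard : Nat.card G = p) (hGτcard : Nat.card Gτ = p)
    (e : G → G → Gτ)
    (hbil : ∀ (g h : G) (a b : ZMod p),
      e (g ^ (a : ZMod p).val) (h ^ (b : ZMod p).val) = (e g h) ^ ((a * b : ZMod p)).val)
    (g₀ g₁ g₂ g₃ ξ ρ ϑ : G)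
    (hρ : ∀ y : G, y ∈ Subgroup.zpowers ρ)
    (x_s x_u d d' d_u s_u ψ_u ω_u π : ZMod p)
    (hxω : x_s + ω_u ≠ 0) (hdu : d_u = d + d')
    (Y Ps_U T_U F Y_S : G)
    (hY : Y = ξ ^ (x_u : ZMod p).val * g₁ ^ (d : ZMod p).val)
    (hPs : Ps_U = ξ ^ (x_u : ZMod p).val * g₁ ^ (d_u : ZMod p).val)
    (hT : T_U = (g₀ * Y * g₁ ^ (d' : ZMod p).val * g₂ ^ (s_u : ZMod p).val
                   * g₃ ^ (ψ_u : ZMod p).val) ^ (((x_s + ω_u)⁻¹ : ZMod p)).val)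
    (hF : F = T_U * ϑ ^ (π : ZMod p).val)
    (hYS : Y_S = ρ ^ (x_s : ZMod p).val) :
    e F Y_S / (e g₀ ρ * e Ps_U ρ * (e g₃ ρ) ^ (ψ_u : ZMod p).val)
      = (e g₂ ρ) ^ (s_u : ZMod p).val * (e F ρ) ^ ((-ω_u : ZMod p)).val
        * (e ϑ ρ) ^ ((ω_u * π : ZMod p)).val * (e ϑ Y_S) ^ (π : ZMod p).val := by
  have hρp : ρ ^ p = 1 := hGcard ▸ pow_card_eq_one'
  have hep : e ρ ρ ^ p = 1 := hGτcard ▸ pow_card_eq_one'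
  obtain ⟨a₀, rfl⟩ := exists_pow_zmod_val_eq hρp (hρ g₀)
  obtain ⟨a₁, rfl⟩ := exists_pow_zmod_val_eq hρp (hρ g₁)
  obtain ⟨a₂, rfl⟩ := exists_pow_zmod_val_eq hρp (hρ g₂)
  obtain ⟨a₃, rfl⟩ := exists_pow_zmod_val_eq hρp (hρ g₃)
  obtain ⟨b, rfl⟩ := exists_pow_zmod_val_eq hρp (hρ ξ)
  obtain ⟨c, rfl⟩ := exists_pow_zmod_val_eq hρp (hρ ϑ)
  subst hdu hY hPs hT hF hYS
  simp only [← pow_zmod_val_mul hρp, ← pow_zmod_val_add hρp, hbil,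
    apply_pow_zmod_val_left hbil, div_eq_mul_inv,
    ← pow_zmod_val_mul hep, ← pow_zmod_val_neg hep, ← pow_zmod_val_add hep]
  congr 2
  field_simp
  ring

/-- Correctness (Eq. 9) of the ticket validation proof Π_U³. -/
theorem ticket_validation_proof_correctness
    (p : ℕ) [Fact (Nat.Prime p)]
    (G Gτ : Type*) [CommGroup G] [CommGroup Gτ]
    (hGcard : Nat.card G = p) (hGτcard : Nat.card Gτ = p)
    (e : G → G → Gτ)
    (hbil : ∀ (g h : G) (a b : ZMod p),
      e (g ^ (a : ZMod p).val) (h ^ (b : ZMod p).val) = (e g h) ^ ((a * b : ZMod p)).val)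
    (g₀ g₁ g₂ g₃ ξ ρ ϑ : G)
    (hg₀ : ∀ y : G, y ∈ Subgroup.zpowers g₀)
    (hg₁ : ∀ y : G, y ∈ Subgroup.zpowers g₁)
    (hg₂ : ∀ y : G, y ∈ Subgroup.zpowers g₂)
    (hg₃ : ∀ y : G, y ∈ Subgroup.zpowers g₃)
    (hξ : ∀ y : G, y ∈ Subgroup.zpowers ξ)
    (hρ : ∀ y : G, y ∈ Subgroup.zpowers ρ)
    (hϑ : ∀ y : G, y ∈ Subgroup.zpowers ϑ)
    (x_s x_u d d' d_u s_u ψ_u ω_u π : ZMod p)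
    (hxω : x_s + ω_u ≠ 0) (hdu : d_u = d + d')
    (Y Ps_U T_U F Y_S : G)
    (hY : Y = ξ ^ (x_u : ZMod p).val * g₁ ^ (d : ZMod p).val)
    (hPs : Ps_U = ξ ^ (x_u : ZMod p).val * g₁ ^ (d_u : ZMod p).val)
    (hT : T_U = (g₀ * Y * g₁ ^ (d' : ZMod p).val * g₂ ^ (s_u : ZMod p).val
                   * g₃ ^ (ψ_u : ZMod p).val) ^ (((x_s + ω_u)⁻¹ : ZMod p)).val)
    (hF : F = T_U * ϑ ^ (π : ZMod p).val)
    (hYS : Y_S = ρ ^ (x_s : ZMod p).val) :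
    e F Y_S / (e g₀ ρ * e Ps_U ρ * (e g₃ ρ) ^ (ψ_u : ZMod p).val)
      = (e g₂ ρ) ^ (s_u : ZMod p).val * (e F ρ) ^ ((-ω_u : ZMod p)).val
        * (e ϑ ρ) ^ ((ω_u * π : ZMod p)).val * (e ϑ Y_S) ^ (π : ZMod p).val :=
  ticket_validation_proof_correctness_general p G Gτ hGcard hGτcard e hbil g₀ g₁ g₂ g₃ ξ ρ ϑ hρ x_s
    x_u d d' d_u s_u ψ_u ω_u π hxω hdu Y Ps_U T_U F Y_S hY hPs hT hF hYS
end

section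
/- In the BBS+ signing simulation of Claim 1: with g₀ = ρ^{ã}, g₁ = ρ^{((x_s+α̃)γ̃-1)/β̃} (β̃ ≠ 0, x_s + m_i ≠ 0), σ_i = ρ^{1/(x_s+m_i)}, and t ∈ Z_p, it holds that (g₀ · g₁^t)^{1/(x_s+m_i)} = σ_i^{ã} · ρ^{t·γ̃/β̃} · σ_i^{t·((α̃-m_i)·γ̃ - 1)/β̃}. -/
/-- Claim 1 BBS+ signing simulation identity: with `g₀ = ρ^ã`,
`g₁ = ρ^{((x_s+α̃)γ̃-1)/β̃}` and `σᵢ = ρ^{1/(x_s+mᵢ)}`, for any `t`,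
`(g₀·g₁^t)^{1/(x_s+mᵢ)} = σᵢ^{ã} · ρ^{tγ̃/β̃} · σᵢ^{t((α̃-mᵢ)γ̃-1)/β̃}`. -/
theorem bbs_plus_signing_simulation
    (p : ℕ) [Fact (Nat.Prime p)]
    (G : Type*) [CommGroup G]
    (hGcard : Nat.card G = p)
    (ρ : G) (hρ : ∀ y : G, y ∈ Subgroup.zpowers ρ)
    (x_s m_i atil αtil βtil γtil t : ZMod p)
    (hβ : βtil ≠ 0) (hxm : x_s + m_i ≠ 0)
    (g₀ g₁ σ_i : G)
    (hg₀ : g₀ = ρ ^ (atil : ZMod p).val)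
    (hg₁ : g₁ = ρ ^ ((((x_s + αtil) * γtil - 1) * βtil⁻¹ : ZMod p)).val)
    (hσ : σ_i = ρ ^ (((x_s + m_i)⁻¹ : ZMod p)).val) :
    (g₀ * g₁ ^ (t : ZMod p).val) ^ (((x_s + m_i)⁻¹ : ZMod p)).val
      = σ_i ^ (atil : ZMod p).val * ρ ^ ((t * γtil * βtil⁻¹ : ZMod p)).val
        * σ_i ^ ((t * ((αtil - m_i) * γtil - 1) * βtil⁻¹ : ZMod p)).val := by
  have htop : Subgroup.zpowers ρ = ⊤ := by
    ext y; simpa using hρ y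
  have horder : orderOf ρ = p := by
    rw [← Nat.card_zpowers, htop, ← hGcard]
    exact Nat.card_congr Subgroup.topEquiv.toEquiv
  have hmodeq : ∀ a : ZMod p, ∀ n : ℕ, a.val ≡ n [MOD p] → ρ ^ a.val = ρ ^ n := by
    intro a n h
    exact pow_eq_pow_iff_modEq.mpr (by rwa [horder])
  have hmul : ∀ a b : ZMod p, ρ ^ a.val * ρ ^ b.val = ρ ^ (a + b).val := by
    intro a b
    rw [← pow_add]
    exact (hmodeq (a + b) (a.val + b.val) (by
      rw [ZMod.val_add]; exact (Nat.mod_modEq _ p))).symm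
  have hpow : ∀ a b : ZMod p, (ρ ^ a.val) ^ b.val = ρ ^ (a * b).val := by
    intro a b
    rw [← pow_mul]
    exact (hmodeq (a * b) (a.val * b.val) (by
      rw [ZMod.val_mul]; exact (Nat.mod_modEq _ p))).symm
  subst hg₀ hg₁ hσ
  rw [hpow, hmul, hpow, hpow, hpow, hmul, hmul]
  congr 1
  field_simp
  ring_nf
end
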